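/- (Theorem 2.1, d = 2, annulus version) Let n ≥ 1, r > 0, 0 ≤ α ≤ β with β ≥ r, and let F, G : ℤ² → GL(n,ℂ) satisfy F(y) = G(y) = I for all y ∉ B_r ∩ ℤ². If S(F)(γ_z) = S(G)(γ_z) for every z ∈ ℤ² with α ≤ |z| ≤ β, then F(z) = G(z) for every z ∈ ℤ² with α ≤ |z| ≤ β. -/

import Mathlib

noncomputable section

open Matrix

/-- Embedding of the lattice `ℤ^d` into Euclidean `ℝ^d`. -/
def emb {d : ℕ} (z : Fin d → ℤ) : EuclideanSpace ℝ (Fin d) := WithLp.toLp 2 (fun i => (z i : ℝ))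

/- Ordered product of `Φ` over `supp`: the factors are multiplied so that larger values
of `key` contribute factors further to the left (the value is `1` if no strictly
`key`-decreasing enumeration of `supp` by a list exists). -/
open Classical in
noncomputable def oprodBy {α G : Type*} [Monoid G] (Φ : α → G) (key : α → ℝ) (supp : Set α) : G :=
  if h : ∃ l : List α, l.Pairwise (fun a b => key b < key a) ∧ ∀ a, a ∈ l ↔ a ∈ supp
  then (h.choose.map Φ).prod else 1

/-- The discrete non-abelian X-ray transform of `F` along the oriented line through `x`
with direction `θ`: the ordered product of `F y` over lattice points `y` on the line,
the point furthest along the orientation contributing the leftmost factor. -/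
noncomputable def discS {d : ℕ} {G : Type*} [Monoid G] (F : (Fin d → ℤ) → G)
    (x θ : EuclideanSpace ℝ (Fin d)) : G :=
  oprodBy F (fun z => ∑ i, ((z i : ℝ) - x i) * θ i)
    {z | (∃ t : ℝ, emb z = x + t • θ) ∧ F z ≠ 1}
/-- The direction of the rational ray γ_z in ℝ²: for z ≠ 0 it is (−z₂, z₁)/|z|, and for
z = 0 it is a fixed rational direction θ₀. -/
def rayDir (θ₀ : EuclideanSpace ℝ (Fin 2)) (z : Fin 2 → ℤ) : EuclideanSpace ℝ (Fin 2) :=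
  if z = 0 then θ₀ else ‖emb z‖⁻¹ • emb ![-(z 1), z 0]

/-! If `F` and `G` differed somewhere on the annulus, pick such a point `z` of maximal norm; there
are finitely many candidates because `F = G = 1` outside `B_r`. The line `γ_z` is tangent at `z` to
the circle of radius `|z|`, so every other lattice point of `γ_z` is strictly farther from the
origin: it lies either outside `B_r`, where `F = G = 1`, or still in the annulus (as `β ≥ r`), where
`F = G` by maximality. The two ordered products along `γ_z` then agree in every factor except the
one at `z`, and cancelling gives `F z = G z`. -/

open scoped RealInnerProductSpace

namespace List

variable {α G : Type*}

lemma prod_map_filter_ne_one [Monoid G] [DecidableEq G] (Φ : α → G) (l : List α) :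
    ((l.filter (fun a => Φ a != 1)).map Φ).prod = (l.map Φ).prod := by
  rw [← prod_filter_bne_one (l.map Φ), filter_map]
  rfl

lemma eq_of_prod_map_eq [CancelMonoid G] {Φ Ψ : α → G} {l : List α} {z : α} (hl : l.Nodup)
    (hz : z ∈ l) (heq : ∀ y ∈ l, y ≠ z → Φ y = Ψ y)
    (hprod : (l.map Φ).prod = (l.map Ψ).prod) : Φ z = Ψ z := by
  obtain ⟨l₁, l₂, rfl⟩ := append_of_mem hz
  have hz' : z ∉ l₁ ++ l₂ := (nodup_cons.1 (nodup_middle.1 hl)).1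
  have h₁ : l₁.map Φ = l₁.map Ψ := map_congr_left fun y hy =>
    heq y (by simp [hy]) (by rintro rfl; simp [hy] at hz')
  have h₂ : l₂.map Φ = l₂.map Ψ := map_congr_left fun y hy =>
    heq y (by simp [hy]) (by rintro rfl; simp [hy] at hz')
  simp only [map_append, map_cons, prod_append, prod_cons, h₁, h₂] at hprod
  exact mul_right_cancel (mul_left_cancel hprod)

lemma Pairwise.nodup_of_key_lt {β : Type*} [Preorder β] {key : α → β} {l : List α}
    (hl : l.Pairwise (fun a b => key b < key a)) : l.Nodup :=
  hl.imp fun h => ne_of_apply_ne key (ne_of_gt h)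

end List

lemma Set.Finite.exists_list_pairwise_lt {α β : Type*} [LinearOrder β] {s : Set α} (hs : s.Finite)
    (key : α → β)
    (hinj : s.InjOn key) :
    ∃ l : List α, l.Pairwise (fun a b => key b < key a) ∧ ∀ a, a ∈ l ↔ a ∈ s := by
  set l := hs.toFinset.toList.mergeSort (fun a b => decide (key b ≤ key a))
  have hperm := List.mergeSort_perm hs.toFinset.toList (fun a b => decide (key b ≤ key a))
  have hmem : ∀ a, a ∈ l ↔ a ∈ s := by simp [l, hperm.mem_iff]
  have hnd : l.Nodup := hperm.nodup_iff.2 (Finset.nodup_toList _)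
  have hle := List.pairwise_mergeSort (l := hs.toFinset.toList)
    (le := fun a b => decide (key b ≤ key a))
    (fun a b c hab hbc => by simp only [decide_eq_true_eq] at *; exact hbc.trans hab)
    (fun a b => by simpa using le_total (key b) (key a))
  refine ⟨l, (hle.and hnd).imp_of_mem fun ha hb ⟨hab, hne⟩ => ?_, hmem⟩
  exact lt_of_le_of_ne (by simpa using hab)
    fun h => hne (hinj ((hmem _).1 ha) ((hmem _).1 hb) h.symm)

section oprodBy

variable {α G : Type*} [Monoid G] {Φ : α → G} {key : α → ℝ} {supp : Set α} {l : List α}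

lemma oprodBy_eq_prod (hl : l.Pairwise (fun a b => key b < key a))
    (hmem : ∀ a, a ∈ l ↔ a ∈ supp) : oprodBy Φ key supp = (l.map Φ).prod := by
  have hex : ∃ l : List α, l.Pairwise (fun a b => key b < key a) ∧ ∀ a, a ∈ l ↔ a ∈ supp :=
    ⟨l, hl, hmem⟩
  obtain ⟨hl', hmem'⟩ := hex.choose_spec
  have hperm : hex.choose.Perm l :=
    (List.perm_ext_iff_of_nodup hl'.nodup_of_key_lt hl.nodup_of_key_lt).2
      fun a => (hmem' a).trans (hmem a).symm
  rw [oprodBy, dif_pos hex,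
    hperm.eq_of_pairwise (fun _ _ _ _ h₁ h₂ => (lt_asymm h₁ h₂).elim) hl' hl]

lemma oprodBy_eq_prod_of_supp (hl : l.Pairwise (fun a b => key b < key a))
    (hsupp : ∀ a, a ∈ supp ↔ a ∈ l ∧ Φ a ≠ 1) : oprodBy Φ key supp = (l.map Φ).prod := by
  classical
  rw [oprodBy_eq_prod (l := l.filter (fun a => Φ a != 1)) (hl.sublist List.filter_sublist)
    (by simp [hsupp]), List.prod_map_filter_ne_one]

end oprodBy

section Lattice

variable {d : ℕ}

lemma emb_injective : Function.Injective (@emb d) := fun a b h =>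
  funext fun i => by simpa [emb] using congrArg (fun v : EuclideanSpace ℝ (Fin d) => v i) h

@[simp] lemma emb_zero : emb (0 : Fin d → ℤ) = 0 := by
  ext; simp [emb]

lemma finite_setOf_norm_emb_le (R : ℝ) : {y : Fin d → ℤ | ‖emb y‖ ≤ R}.Finite := by
  refine (Set.Finite.pi fun _ => Set.finite_Icc (-⌈R⌉) ⌈R⌉).subset fun y hy i _ => ?_
  have hyi : ((|y i| : ℤ) : ℝ) ≤ ⌈R⌉ := calc
    ((|y i| : ℤ) : ℝ) = ‖emb y i‖ := by simp [emb]
    _ ≤ ‖emb y‖ := PiLp.norm_apply_le _ i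
    _ ≤ ⌈R⌉ := hy.trans (Int.le_ceil R)
  exact abs_le.1 (by exact_mod_cast hyi)

/-- The key by which `discS` orders the lattice points of a line. -/
def lineKey (x θ : EuclideanSpace ℝ (Fin d)) (y : Fin d → ℤ) : ℝ := ∑ i, ((y i : ℝ) - x i) * θ i

lemma lineKey_eq_mul_norm_sq {x θ : EuclideanSpace ℝ (Fin d)} {y : Fin d → ℤ} {t : ℝ}
    (hy : emb y = x + t • θ) : lineKey x θ y = t * ‖θ‖ ^ 2 := by
  have hyi (i : Fin d) : (y i : ℝ) - x i = t * θ i := by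
    have := congrArg (fun v : EuclideanSpace ℝ (Fin d) => v i) hy
    simp only [emb, PiLp.add_apply, PiLp.smul_apply, smul_eq_mul] at this
    linarith
  rw [lineKey, EuclideanSpace.norm_sq_eq, Finset.mul_sum]
  simp [hyi, mul_assoc, sq]

lemma injOn_lineKey (x θ : EuclideanSpace ℝ (Fin d)) :
    Set.InjOn (lineKey x θ) {y | ∃ t : ℝ, emb y = x + t • θ} := by
  rintro a ⟨s, hs⟩ b ⟨t, ht⟩ hab
  rw [lineKey_eq_mul_norm_sq hs, lineKey_eq_mul_norm_sq ht] at hab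
  apply emb_injective
  rcases eq_or_ne θ 0 with rfl | hθ
  · simp [hs, ht]
  · rw [hs, ht, mul_right_cancel₀ (by positivity) hab]

theorem apply_eq_of_discS_eq {G : Type*} [CancelMonoid G] {F F' : (Fin d → ℤ) → G}
    {x θ : EuclideanSpace ℝ (Fin d)} {z : Fin d → ℤ} (hF : {y | F y ≠ 1}.Finite)
    (hF' : {y | F' y ≠ 1}.Finite) (hz : ∃ t : ℝ, emb z = x + t • θ)
    (heq : ∀ y, (∃ t : ℝ, emb y = x + t • θ) → y ≠ z → F y = F' y)
    (hS : discS F x θ = discS F' x θ) : F z = F' z := by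
  set line := {y : Fin d → ℤ | ∃ t : ℝ, emb y = x + t • θ}
  set s := line ∩ insert z ({y | F y ≠ 1} ∪ {y | F' y ≠ 1})
  have hs : s.Finite := ((hF.union hF').insert z).subset Set.inter_subset_right
  obtain ⟨l, hl, hmem⟩ :=
    hs.exists_list_pairwise_lt _ ((injOn_lineKey x θ).mono Set.inter_subset_left)
  have hprod (Φ : (Fin d → ℤ) → G) (hΦ : ∀ y ∈ line, Φ y ≠ 1 → y ∈ s) :
      discS Φ x θ = (l.map Φ).prod :=
    oprodBy_eq_prod_of_supp hl fun a =>
      ⟨fun ⟨ha, hΦa⟩ => ⟨(hmem a).2 (hΦ a ha hΦa), hΦa⟩,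
        fun ⟨ha, hΦa⟩ => ⟨((hmem a).1 ha).1, hΦa⟩⟩
  refine List.eq_of_prod_map_eq hl.nodup_of_key_lt
    ((hmem z).2 ⟨hz, Set.mem_insert _ _⟩) (fun y hy hyz => heq y ((hmem y).1 hy).1 hyz) ?_
  rw [← hprod F fun y hy h => ⟨hy, .inr (.inl h)⟩, ← hprod F' fun y hy h => ⟨hy, .inr (.inr h)⟩]
  exact hS

end Lattice

lemma norm_lt_norm_add_of_inner_eq_zero {E : Type*} [NormedAddCommGroup E] [InnerProductSpace ℝ E]
    {x v : E} (h : ⟪x, v⟫ = 0) (hv : v ≠ 0) : ‖x‖ < ‖x + v‖ := by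
  refine lt_of_pow_lt_pow_left₀ 2 (norm_nonneg _) ?_
  rw [sq, sq, norm_add_sq_eq_norm_sq_add_norm_sq_real h]
  exact lt_add_of_pos_right _ (by positivity)

lemma inner_emb_rayDir (θ₀ : EuclideanSpace ℝ (Fin 2)) (z : Fin 2 → ℤ) :
    ⟪emb z, rayDir θ₀ z⟫ = 0 := by
  rw [rayDir]
  split_ifs with hz
  · simp [hz]
  · simp [emb, inner_smul_right, PiLp.inner_apply, Fin.sum_univ_two, mul_comm]

lemma norm_emb_lt_of_mem_rayDir_line (θ₀ : EuclideanSpace ℝ (Fin 2)) {y z : Fin 2 → ℤ}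
    (hy : ∃ t : ℝ, emb y = emb z + t • rayDir θ₀ z) (hyz : y ≠ z) : ‖emb z‖ < ‖emb y‖ := by
  obtain ⟨t, ht⟩ := hy
  rw [ht]
  refine norm_lt_norm_add_of_inner_eq_zero ?_ fun h => hyz (emb_injective ?_)
  · rw [inner_smul_right, inner_emb_rayDir, mul_zero]
  · rw [ht, h, add_zero]

theorem stmt7_general (n : ℕ) (r α β : ℝ) (hβ : r ≤ β)
    (θ₀ : EuclideanSpace ℝ (Fin 2))
    (F G : (Fin 2 → ℤ) → GL (Fin n) ℂ)
    (hF : ∀ y : Fin 2 → ℤ, ¬ ‖emb y‖ ≤ r → F y = 1)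
    (hG : ∀ y : Fin 2 → ℤ, ¬ ‖emb y‖ ≤ r → G y = 1)
    (h : ∀ z : Fin 2 → ℤ, α ≤ ‖emb z‖ → ‖emb z‖ ≤ β →
      discS F (emb z) (rayDir θ₀ z) = discS G (emb z) (rayDir θ₀ z)) :
    ∀ z : Fin 2 → ℤ, α ≤ ‖emb z‖ → ‖emb z‖ ≤ β → F z = G z := by
  intro z hzα hzβ
  by_contra hne
  have hfinite {Φ : (Fin 2 → ℤ) → GL (Fin n) ℂ} (hΦ : ∀ y, ¬ ‖emb y‖ ≤ r → Φ y = 1) :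
      {y | Φ y ≠ 1}.Finite :=
    (finite_setOf_norm_emb_le r).subset fun y hy => by_contra (hy ∘ hΦ y)
  set bad := {y : Fin 2 → ℤ | α ≤ ‖emb y‖ ∧ ‖emb y‖ ≤ β ∧ F y ≠ G y}
  have hbad : bad.Finite := (finite_setOf_norm_emb_le r).subset fun y ⟨_, _, hy⟩ =>
    by_contra fun hyr => hy (by rw [hF y hyr, hG y hyr])
  obtain ⟨w, ⟨hwα, hwβ, hw⟩, hmax⟩ :=
    bad.exists_max_image (fun y => ‖emb y‖) hbad ⟨z, hzα, hzβ, hne⟩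
  refine hw (apply_eq_of_discS_eq (hfinite hF) (hfinite hG) ⟨0, by simp⟩ (fun y hy hyw => ?_)
    (h w hwα hwβ))
  have hfar := norm_emb_lt_of_mem_rayDir_line θ₀ hy hyw
  by_contra hFG
  by_cases hyr : ‖emb y‖ ≤ r
  · exact (hmax y ⟨hwα.trans hfar.le, hyr.trans hβ, hFG⟩).not_gt hfar
  · exact hFG (by rw [hF y hyr, hG y hyr])

/-- Theorem 2.1, d = 2, annulus version: the discrete non-abelian X-ray
transform on the rational rays γ_z with α ≤ |z| ≤ β (β ≥ r) uniquely determines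
F on the annulus α ≤ |z| ≤ β. -/
theorem stmt7 (n : ℕ) (hn : 1 ≤ n) (r α β : ℝ) (hr : 0 < r)
    (hα : 0 ≤ α) (hαβ : α ≤ β) (hβ : r ≤ β)
    (θ₀ : EuclideanSpace ℝ (Fin 2))
    (hθ₀ : ∃ w : Fin 2 → ℤ, w ≠ 0 ∧ θ₀ = ‖emb w‖⁻¹ • emb w)
    (F G : (Fin 2 → ℤ) → GL (Fin n) ℂ)
    (hF : ∀ y : Fin 2 → ℤ, ¬ ‖emb y‖ ≤ r → F y = 1)
    (hG : ∀ y : Fin 2 → ℤ, ¬ ‖emb y‖ ≤ r → G y = 1)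
    (h : ∀ z : Fin 2 → ℤ, α ≤ ‖emb z‖ → ‖emb z‖ ≤ β →
      discS F (emb z) (rayDir θ₀ z) = discS G (emb z) (rayDir θ₀ z)) :
    ∀ z : Fin 2 → ℤ, α ≤ ‖emb z‖ → ‖emb z‖ ≤ β → F z = G z :=
  stmt7_general n r α β hβ θ₀ F G hF hG h
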